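/- Let (Ω, F, P) be a probability space, G ⊆ F a sub-σ-algebra, B > 0 and μ ∈ [0,1], and let X : Ω → ℝ^d satisfy the noisy-encoder condition with parameters (μ, B) relative to G, with MMSE reconstruction X̃ := E[X | G]. Then for every G-measurable random vector X̂ : Ω → ℝ^d whose law equals the law of X, one has |E‖X − X̂‖² − 2·E‖X − X̃‖²| ≤ 12 B² μ. In particular, in the low-rate (noisy-encoder) regime, every zero-perception reconstruction measurable with respect to the encoder output — in particular any reconstruction satisfying the zero joint-distribution perception constraint — has distortion equal to twice the MMSE distortion up to an additive error of order μ. -/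

import Mathlib

open MeasureTheory ProbabilityTheory

/-- The noisy-encoder condition with parameters `(μpar, B)` relative to a sub-σ-algebra `G`:
there is a `G`-measurable family `ω ↦ Q ω` of Borel probability measures on `ℝ^d`, each
supported in the closed ball of radius `B` around the origin, such that for every Borel set
`A`, `E[1_A(X) | G] = (1 − μpar)·P(X ∈ A) + μpar·(Q ·)(A)` almost surely. -/
def NoisyEncoder {Ω : Type*} {G F : MeasurableSpace Ω} (P : Measure Ω) {d : ℕ}
    (X : Ω → EuclideanSpace ℝ (Fin d)) (μpar B : ℝ) : Prop :=
  ∃ Q : Ω → Measure (EuclideanSpace ℝ (Fin d)),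
    (∀ A : Set (EuclideanSpace ℝ (Fin d)), MeasurableSet A →
        Measurable[G] (fun ω => Q ω A)) ∧
    (∀ ω, IsProbabilityMeasure (Q ω)) ∧
    (∀ ω, Q ω (Metric.closedBall 0 B)ᶜ = 0) ∧
    (∀ A : Set (EuclideanSpace ℝ (Fin d)), MeasurableSet A →
      (P[(X ⁻¹' A).indicator (fun _ => (1 : ℝ)) | G]) =ᵐ[P]
        (fun ω => (1 - μpar) * (P (X ⁻¹' A)).toReal + μpar * (Q ω A).toReal))

/-!
Testing the noisy-encoder condition against the linear functionals `⟪v, ·⟫` on the events of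
`G` shows that `X̃ = E[X | G]` stays within `μ B` of the constant `c = (1 - μ) E X`. On the other
hand, for a `G`-measurable `X̂` with the first two moments of `X`, orthogonality of `X - X̃` to
`G`-measurable vectors gives `E‖X - X̂‖² - 2 E‖X - X̃‖² = 2 E⟪X̃ - c, X̃ - X̂⟫` for every
constant `c`, and with the choice above the integrand is at most `μ B · 2B`.
-/

open scoped RealInnerProductSpace ENNReal

theorem norm_le_of_forall_inner_le_of_dense {E : Type*} [NormedAddCommGroup E]
    [InnerProductSpace ℝ E] {D : Set E} (hD : Dense D) {y : E} {r : ℝ} (hr : 0 ≤ r)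
    (h : ∀ v ∈ D, ⟪v, y⟫ ≤ r * ‖v‖) : ‖y‖ ≤ r := by
  have hclosed : IsClosed {v : E | ⟪v, y⟫ ≤ r * ‖v‖} := isClosed_le (by fun_prop) (by fun_prop)
  have hy : ‖y‖ * ‖y‖ ≤ r * ‖y‖ := by
    rw [← real_inner_self_eq_norm_mul_norm]
    exact hclosed.closure_subset_iff.2 h (hD.closure_eq ▸ Set.mem_univ y)
  rcases (norm_nonneg y).eq_or_lt with hy0 | hy0
  · rw [← hy0]; exact hr
  · exact le_of_mul_le_mul_right hy hy0

namespace MeasureTheory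

variable {Ω E : Type*} {m mΩ : MeasurableSpace Ω} {μ : Measure Ω} [NormedAddCommGroup E]

theorem MemLp.integrable_norm_sq {f : Ω → E} (hf : MemLp f 2 μ) :
    Integrable (fun ω => ‖f ω‖ ^ 2) μ :=
  (memLp_two_iff_integrable_sq_norm hf.1).1 hf

theorem condExp_ae_le_of_forall_setIntegral_le (hm : m ≤ mΩ) [IsFiniteMeasure μ] {f : Ω → ℝ}
    (hf : Integrable f μ) {r : ℝ}
    (h : ∀ s, MeasurableSet[m] s → ∫ ω in s, f ω ∂μ ≤ r * μ.real s) :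
    μ[f | m] ≤ᵐ[μ] fun _ => r := by
  refine ae_le_of_ae_le_trim (hm := hm) <| ae_le_of_forall_setIntegral_le
    (integrable_condExp.trim hm stronglyMeasurable_condExp) (integrable_const r) fun s hs _ => ?_
  rw [← setIntegral_trim hm stronglyMeasurable_condExp hs, setIntegral_condExp hm hf hs,
    setIntegral_const, smul_eq_mul, mul_comm, measureReal_def, trim_measurableSet_eq hm hs]
  exact h s hs

variable [InnerProductSpace ℝ E]

theorem MemLp.integrable_inner {f g : Ω → E} (hf : MemLp f 2 μ) (hg : MemLp g 2 μ) :
    Integrable (fun ω => ⟪f ω, g ω⟫) μ :=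
  memLp_one_iff_integrable.1 ((innerSL ℝ).memLp_of_bilin 1 hf hg)

variable [CompleteSpace E]

theorem integral_inner_sub_condExp_eq_zero (hm : m ≤ mΩ) [IsFiniteMeasure μ] {X W : Ω → E}
    (hX : MemLp X 2 μ) (hW : MemLp W 2 μ) (hWm : StronglyMeasurable[m] W) :
    ∫ ω, ⟪X ω - μ[X | m] ω, W ω⟫ ∂μ = 0 := by
  have hpull : ∫ ω, ⟪X ω, W ω⟫ ∂μ = ∫ ω, ⟪μ[X | m] ω, W ω⟫ ∂μ := by
    rw [← integral_condExp hm]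
    exact integral_congr_ae (condExp_bilin_of_stronglyMeasurable_right (innerSL ℝ) hWm
      (hX.integrable_inner hW) (hX.integrable one_le_two))
  simp_rw [inner_sub_left]
  rw [integral_sub (hX.integrable_inner hW) ((hX.condExp one_le_two).integrable_inner hW), hpull,
    sub_self]

theorem integral_norm_sub_sq_sub_two_mul_eq (hm : m ≤ mΩ) [IsFiniteMeasure μ] {X Y : Ω → E}
    (hX : MemLp X 2 μ) (hY : MemLp Y 2 μ) (hYm : StronglyMeasurable[m] Y)
    (hmean : ∫ ω, Y ω ∂μ = ∫ ω, X ω ∂μ) (hsq : ∫ ω, ‖Y ω‖ ^ 2 ∂μ = ∫ ω, ‖X ω‖ ^ 2 ∂μ) (c : E) :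
    ∫ ω, ‖X ω - Y ω‖ ^ 2 ∂μ - 2 * ∫ ω, ‖X ω - μ[X | m] ω‖ ^ 2 ∂μ
      = 2 * ∫ ω, ⟪μ[X | m] ω - c, μ[X | m] ω - Y ω⟫ ∂μ := by
  set Xt := μ[X | m]
  have hXt : MemLp Xt 2 μ := hX.condExp one_le_two
  -- The last three terms have mean zero: by `hsq`, by orthogonality, and by `hmean`.
  have hpointwise : ∀ ω, ‖X ω - Y ω‖ ^ 2 - 2 * ‖X ω - Xt ω‖ ^ 2
      = 2 * ⟪Xt ω - c, Xt ω - Y ω⟫ + (‖Y ω‖ ^ 2 - ‖X ω‖ ^ 2)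
        + 2 * ⟪X ω - Xt ω, (2 : ℝ) • Xt ω - Y ω⟫ + 2 * ⟪c, Xt ω - Y ω⟫ := fun ω => by
    simp only [norm_sub_sq_real, inner_sub_left, inner_sub_right, real_inner_smul_right,
      real_inner_self_eq_norm_sq]
    ring
  have horth : ∫ ω, ⟪X ω - Xt ω, (2 : ℝ) • Xt ω - Y ω⟫ ∂μ = 0 :=
    integral_inner_sub_condExp_eq_zero hm hX ((hXt.const_smul 2).sub hY)
      ((stronglyMeasurable_condExp.const_smul 2).sub hYm)
  have hconst : ∫ ω, ⟪c, Xt ω - Y ω⟫ ∂μ = 0 := by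
    have hint : Integrable (fun ω => Xt ω - Y ω) μ := (hXt.sub hY).integrable one_le_two
    rw [integral_inner hint, integral_sub (hXt.integrable one_le_two) (hY.integrable one_le_two),
      integral_condExp hm, hmean, sub_self, inner_zero_right]
  have h₁ : Integrable (fun ω => ‖X ω - Y ω‖ ^ 2) μ := (hX.sub hY).integrable_norm_sq
  have h₂ : Integrable (fun ω => ‖X ω - Xt ω‖ ^ 2) μ := (hX.sub hXt).integrable_norm_sq
  have h₃ : Integrable (fun ω => ⟪Xt ω - c, Xt ω - Y ω⟫) μ :=
    (hXt.sub (memLp_const c)).integrable_inner (hXt.sub hY)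
  have h₄ : Integrable (fun ω => ‖Y ω‖ ^ 2 - ‖X ω‖ ^ 2) μ :=
    hY.integrable_norm_sq.sub hX.integrable_norm_sq
  have h₅ : Integrable (fun ω => ⟪X ω - Xt ω, (2 : ℝ) • Xt ω - Y ω⟫) μ :=
    (hX.sub hXt).integrable_inner ((hXt.const_smul 2).sub hY)
  have h₆ : Integrable (fun ω => ⟪c, Xt ω - Y ω⟫) μ :=
    (memLp_const c).integrable_inner (hXt.sub hY)
  rw [← integral_const_mul, ← integral_sub h₁ (h₂.const_mul 2),
    integral_congr_ae (.of_forall hpointwise), integral_add, integral_add, integral_add,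
    integral_sub hY.integrable_norm_sq hX.integrable_norm_sq, integral_const_mul,
    integral_const_mul, integral_const_mul, hsq, horth, hconst]
  · ring
  exacts [h₃.const_mul 2, h₄, (h₃.const_mul 2).add h₄, h₅.const_mul 2,
    ((h₃.const_mul 2).add h₄).add (h₅.const_mul 2), h₆.const_mul 2]

end MeasureTheory

theorem map_restrict_eq_of_condExp_indicator {Ω α : Type*} {G F : MeasurableSpace Ω}
    [MeasurableSpace α] (hG : G ≤ F) {P : Measure Ω} [IsProbabilityMeasure P] {X : Ω → α}
    (hX : Measurable X) {Q : Ω → Measure α} (hQ : Measurable Q)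
    [∀ ω, IsProbabilityMeasure (Q ω)] {μpar : ℝ} (hμ : μpar ∈ Set.Icc (0 : ℝ) 1)
    (hcond : ∀ A : Set α, MeasurableSet A →
      (P[(X ⁻¹' A).indicator (fun _ => (1 : ℝ)) | G]) =ᵐ[P]
        (fun ω => (1 - μpar) * (P (X ⁻¹' A)).toReal + μpar * (Q ω A).toReal))
    {S : Set Ω} (hS : MeasurableSet[G] S) :
    (P.restrict S).map X = (ENNReal.ofReal (1 - μpar) * P S) • P.map X
      + ENNReal.ofReal μpar • (P.restrict S).bind Q := by
  ext A hA
  have hXA : MeasurableSet (X ⁻¹' A) := hX hA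
  have hQA : Measurable fun ω => Q ω A := (Measure.measurable_coe hA).comp hQ
  have hQA_int : Integrable (fun ω => (Q ω A).toReal) (P.restrict S) :=
    .of_bound hQA.ennreal_toReal.aestronglyMeasurable 1 (.of_forall fun ω => by
      rw [Real.norm_of_nonneg ENNReal.toReal_nonneg]; exact measureReal_le_one)
  have hreal : P.real (X ⁻¹' A ∩ S)
      = (1 - μpar) * P.real S * P.real (X ⁻¹' A) + μpar * ∫ ω in S, (Q ω A).toReal ∂P := by
    calc P.real (X ⁻¹' A ∩ S) = ∫ ω in S, (X ⁻¹' A).indicator (fun _ => (1 : ℝ)) ω ∂P := by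
          rw [← measureReal_restrict_apply hXA, ← integral_indicator_one hXA]; rfl
      _ = ∫ ω in S, (1 - μpar) * P.real (X ⁻¹' A) + μpar * (Q ω A).toReal ∂P := by
          rw [← setIntegral_condExp hG ((integrable_const 1).indicator hXA) hS]
          exact setIntegral_congr_ae (hG S hS) ((hcond A hA).mono fun ω h _ => h)
      _ = _ := by
          rw [integral_add (integrable_const _) (hQA_int.const_mul _), setIntegral_const,
            integral_const_mul, smul_eq_mul]
          ring
  have hlint : ∫ ω in S, (Q ω A).toReal ∂P = (∫⁻ ω in S, Q ω A ∂P).toReal :=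
    integral_toReal hQA.aemeasurable (.of_forall fun ω => measure_lt_top _ _)
  have hlint_ne_top : ∫⁻ ω in S, Q ω A ∂P ≠ ∞ :=
    ((lintegral_mono fun ω => prob_le_one).trans_lt (by simp)).ne
  rw [Measure.map_apply hX hA, Measure.restrict_apply hXA, Measure.add_apply, Measure.smul_apply,
    Measure.smul_apply, Measure.map_apply hX hA, Measure.bind_apply hA hQ.aemeasurable,
    smul_eq_mul, smul_eq_mul,
    ← ENNReal.toReal_eq_toReal_iff' (measure_ne_top _ _) (by finiteness),
    ENNReal.toReal_add (by finiteness) (by finiteness), ENNReal.toReal_mul, ENNReal.toReal_mul,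
    ENNReal.toReal_mul, ENNReal.toReal_ofReal (by linarith [hμ.2]), ENNReal.toReal_ofReal hμ.1,
    ← hlint]
  exact hreal

theorem setIntegral_inner_le_of_condExp_indicator {Ω E : Type*} {G F : MeasurableSpace Ω}
    [NormedAddCommGroup E] [InnerProductSpace ℝ E] [CompleteSpace E] [MeasurableSpace E]
    [BorelSpace E] (hG : G ≤ F) {P : Measure Ω} [IsProbabilityMeasure P] {X : Ω → E}
    (hX : Measurable X) (hXint : Integrable X P) {Q : Ω → Measure E} (hQ : Measurable Q)
    [∀ ω, IsProbabilityMeasure (Q ω)] {μpar B : ℝ} (hμ : μpar ∈ Set.Icc (0 : ℝ) 1)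
    (hQB : ∀ ω, Q ω (Metric.closedBall 0 B)ᶜ = 0)
    (hcond : ∀ A : Set E, MeasurableSet A →
      (P[(X ⁻¹' A).indicator (fun _ => (1 : ℝ)) | G]) =ᵐ[P]
        (fun ω => (1 - μpar) * (P (X ⁻¹' A)).toReal + μpar * (Q ω A).toReal))
    (v : E) {S : Set Ω} (hS : MeasurableSet[G] S) :
    ∫ ω in S, ⟪v, X ω⟫ ∂P
      ≤ ((1 - μpar) * ⟪v, ∫ ω, X ω ∂P⟫ + μpar * (B * ‖v‖)) * P.real S := by
  set κ := (P.restrict S).bind Q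
  have hκ_univ : κ Set.univ = P S := by
    simp [κ, Measure.bind_apply MeasurableSet.univ hQ.aemeasurable]
  have : IsFiniteMeasure κ := ⟨by simp [hκ_univ]⟩
  have hκB : ∀ᵐ x ∂κ, ‖⟪v, x⟫‖ ≤ B * ‖v‖ := by
    have : κ (Metric.closedBall 0 B)ᶜ = 0 := by
      simp [κ, Measure.bind_apply measurableSet_closedBall.compl hQ.aemeasurable, hQB]
    filter_upwards [measure_eq_zero_iff_ae_notMem.1 this] with x hx
    simp only [Set.mem_compl_iff, not_not, mem_closedBall_zero_iff] at hx
    exact (norm_inner_le_norm v x).trans (by rw [mul_comm]; gcongr)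
  have hκ_int : Integrable (fun x => ⟪v, x⟫) κ := .of_bound (by fun_prop) _ hκB
  have hmap_int : Integrable (fun x => ⟪v, x⟫) (P.map X) :=
    (integrable_map_measure (by fun_prop) hX.aemeasurable).2 (hXint.const_inner v)
  have hsplit : ∫ ω in S, ⟪v, X ω⟫ ∂P
      = (1 - μpar) * P.real S * ⟪v, ∫ ω, X ω ∂P⟫ + μpar * ∫ x, ⟪v, x⟫ ∂κ := by
    rw [← integral_map hX.aemeasurable.restrict (by fun_prop),
      map_restrict_eq_of_condExp_indicator hG hX hQ hμ hcond hS,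
      integral_add_measure (hmap_int.smul_measure (by finiteness)) (hκ_int.smul_measure (by simp)),
      integral_smul_measure, integral_smul_measure, integral_map hX.aemeasurable (by fun_prop),
      integral_inner hXint, ENNReal.toReal_mul, ENNReal.toReal_ofReal (by linarith [hμ.2]),
      ENNReal.toReal_ofReal hμ.1, smul_eq_mul, smul_eq_mul, measureReal_def]
  have hκ_bound : ∫ x, ⟪v, x⟫ ∂κ ≤ B * ‖v‖ * P.real S := by
    have := norm_integral_le_of_norm_le_const hκB
    rw [measureReal_def, hκ_univ, ← measureReal_def] at this
    exact (Real.le_norm_self _).trans this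
  rw [hsplit]
  linear_combination mul_le_mul_of_nonneg_left hκ_bound hμ.1

theorem NoisyEncoder.ae_norm_condExp_sub_le {Ω : Type*} {G F : MeasurableSpace Ω} (hG : G ≤ F)
    {P : Measure Ω} [IsProbabilityMeasure P] {d : ℕ} {X : Ω → EuclideanSpace ℝ (Fin d)}
    (hX : Measurable X) (hXint : Integrable X P) {μpar B : ℝ} (hμ : μpar ∈ Set.Icc (0 : ℝ) 1)
    (hB : 0 ≤ B) (hne : NoisyEncoder (G := G) P X μpar B) :
    ∀ᵐ ω ∂P, ‖P[X | G] ω - (1 - μpar) • ∫ ω, X ω ∂P‖ ≤ μpar * B := by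
  obtain ⟨Q, hQG, hQprob, hQB, hcond⟩ := hne
  have hQ : Measurable Q :=
    Measure.measurable_of_measurable_coe Q fun A hA => (hQG A hA).mono hG le_rfl
  have hdir : ∀ v, ∀ᵐ ω ∂P,
      ⟪v, P[X | G] ω - (1 - μpar) • ∫ ω, X ω ∂P⟫ ≤ μpar * B * ‖v‖ := fun v => by
    filter_upwards [(innerSL ℝ v).comp_condExp_comm hXint,
      condExp_ae_le_of_forall_setIntegral_le hG (hXint.const_inner v)
        fun S hS => setIntegral_inner_le_of_condExp_indicator hG hX hXint hQ hμ hQB hcond v hS]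
      with ω h₁ h₂
    change ⟪v, P[X | G] ω⟫ = P[fun ω => ⟪v, X ω⟫ | G] ω at h₁
    rw [inner_sub_right, real_inner_smul_right, h₁]
    linarith
  obtain ⟨D, hD_countable, hD_dense⟩ :=
    TopologicalSpace.exists_countable_dense (EuclideanSpace ℝ (Fin d))
  filter_upwards [(ae_ball_iff hD_countable).2 fun v _ => hdir v] with ω hω
  exact norm_le_of_forall_inner_le_of_dense hD_dense (mul_nonneg hμ.1 hB) hω

theorem statement6 {Ω : Type*} {G F : MeasurableSpace Ω} (hG : G ≤ F)
    (P : Measure Ω) [IsProbabilityMeasure P] {d : ℕ}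
    (B μpar : ℝ) (hB : 0 < B) (hμ : μpar ∈ Set.Icc (0 : ℝ) 1)
    (X : Ω → EuclideanSpace ℝ (Fin d)) (hXmeas : Measurable X)
    (hXbdd : ∀ᵐ ω ∂P, ‖X ω‖ ≤ B)
    (hne : NoisyEncoder (G := G) P X μpar B)
    (Xhat : Ω → EuclideanSpace ℝ (Fin d)) (hXhat_meas : Measurable[G] Xhat)
    (hlaw : P.map Xhat = P.map X) :
    |(∫ ω, ‖X ω - Xhat ω‖ ^ 2 ∂P) - 2 * ∫ ω, ‖X ω - (P[X|G]) ω‖ ^ 2 ∂P|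
      ≤ 12 * B ^ 2 * μpar := by
  have hX : MemLp X 2 P := .of_bound hXmeas.aestronglyMeasurable B hXbdd
  have hXhat_X : IdentDistrib Xhat X P P :=
    ⟨(hXhat_meas.mono hG le_rfl).aemeasurable, hXmeas.aemeasurable, hlaw⟩
  have hXhat_bdd : ∀ᵐ ω ∂P, ‖Xhat ω‖ ≤ B :=
    hXhat_X.symm.ae_snd (measurableSet_le measurable_norm measurable_const) hXbdd
  set c := (1 - μpar) • ∫ ω, X ω ∂P
  have hc : ‖c‖ ≤ (1 - μpar) * B := by
    rw [norm_smul, Real.norm_of_nonneg (by linarith [hμ.2])]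
    gcongr
    · linarith [hμ.2]
    · simpa using norm_integral_le_of_norm_le_const hXbdd
  have hbound : ∀ᵐ ω ∂P, ‖⟪P[X|G] ω - c, P[X|G] ω - Xhat ω⟫‖ ≤ μpar * B * (2 * B) := by
    filter_upwards [NoisyEncoder.ae_norm_condExp_sub_le hG hXmeas (hX.integrable one_le_two) hμ
      hB.le hne, hXhat_bdd] with ω hnear hXhat_ω
    have hXt_ω : ‖P[X|G] ω‖ ≤ B := by
      calc ‖P[X|G] ω‖ ≤ ‖P[X|G] ω - c‖ + ‖c‖ := norm_le_norm_sub_add _ _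
        _ ≤ μpar * B + (1 - μpar) * B := add_le_add hnear hc
        _ = B := by ring
    calc ‖⟪P[X|G] ω - c, P[X|G] ω - Xhat ω⟫‖ ≤ ‖P[X|G] ω - c‖ * ‖P[X|G] ω - Xhat ω‖ :=
          norm_inner_le_norm _ _
      _ ≤ μpar * B * (2 * B) :=
          mul_le_mul hnear ((norm_sub_le _ _).trans (by linarith)) (norm_nonneg _)
            (mul_nonneg hμ.1 hB.le)
  rw [integral_norm_sub_sq_sub_two_mul_eq hG hX (hXhat_X.symm.memLp_snd hX)
    hXhat_meas.stronglyMeasurable hXhat_X.integral_eq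
    (hXhat_X.comp (continuous_norm.pow 2).measurable).integral_eq c, abs_mul, abs_two,
    ← Real.norm_eq_abs]
  calc 2 * ‖∫ ω, ⟪P[X|G] ω - c, P[X|G] ω - Xhat ω⟫ ∂P‖ ≤ 2 * (μpar * B * (2 * B)) := by
        gcongr
        simpa using norm_integral_le_of_norm_le_const hbound
    _ ≤ 12 * B ^ 2 * μpar := by nlinarith [hμ.1, sq_nonneg B]
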